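/- arXiv:2201.08090 — 6 statements merged into one kernel-verified Lean document; each statement's English description precedes it below -/
import Mathlib

section
/- For every T > 0 and every μ ∈ ℝ there exist constants C₁ > 0 and C₂ > 0 such that for all p, q ∈ ℝ one has C₁(1 + p² + q²) ≤ L_{T,μ}(p,q)^{-1} ≤ C₂(1 + p² + q²). -/
open MeasureTheory Real Filter

/-- The function `L_{T,μ}(p,q)`, extended continuously across `p²+q² = 2μ`. -/
noncomputable def Lfun (T μ p q : ℝ) : ℝ :=
  if p ^ 2 + q ^ 2 = 2 * μ then (1 - Real.tanh ((p ^ 2 - μ) / (2 * T)) ^ 2) / (2 * T)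
  else (Real.tanh ((p ^ 2 - μ) / (2 * T)) + Real.tanh ((q ^ 2 - μ) / (2 * T))) /
    (p ^ 2 + q ^ 2 - 2 * μ)

/-- `B_{T,μ}(p,q) = L_{T,μ}((p+q)/2, (p−q)/2)`. -/
noncomputable def Bfun (T μ p q : ℝ) : ℝ := Lfun T μ ((p + q) / 2) ((p - q) / 2)

/-- `F_{T,μ}(p) = tanh((p²−μ)/(2T))/(p²−μ)`, extended by `1/(2T)` at `p² = μ`. -/
noncomputable def Ffun (T μ p : ℝ) : ℝ :=
  if p ^ 2 = μ then 1 / (2 * T) else Real.tanh ((p ^ 2 - μ) / (2 * T)) / (p ^ 2 - μ)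

/-- `a_{T,μ} = (1/(4π)) ∫ B_{T,μ}(0,q) dq`. -/
noncomputable def aconst (T μ : ℝ) : ℝ := (1 / (4 * Real.pi)) * ∫ q : ℝ, Bfun T μ 0 q

/-- `A_{T,μ}(p) = (1/(4π)) ∫ B_{T,μ}(p,q) dq`. -/
noncomputable def Afun (T μ p : ℝ) : ℝ := (1 / (4 * Real.pi)) * ∫ q : ℝ, Bfun T μ p q

/-!
Put `a = (p² - μ)/(2T)` and `b = (q² - μ)/(2T)`. Since
`tanh a + tanh b = sinh (a + b)/(cosh a cosh b)`, we get
`L⁻¹ = 2T cosh a cosh b (a + b)/sinh (a + b)`, also on the diagonal `a + b = 0`.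
As `2 cosh a cosh b = cosh (a + b) + cosh (a - b)` and `a, b ≥ -|μ|/(2T)` forces
`|a - b| ≤ |a + b| + |μ|/T`, this is comparable to `(a + b) coth (a + b)`, which lies between
`(1 + |a + b|)/2` and `1 + |a + b|`. Finally `p² + q² = 2T(a + b) + 2μ`, so `1 + |a + b|` is
comparable to `1 + p² + q²`.
-/

namespace Real

noncomputable def sinhc (x : ℝ) : ℝ := if x = 0 then 1 else sinh x / x

lemma sinhc_neg (x : ℝ) : sinhc (-x) = sinhc x := by
  simp only [sinhc, neg_eq_zero, sinh_neg, neg_div_neg_eq]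

lemma sinhc_abs (x : ℝ) : sinhc |x| = sinhc x := by
  rcases abs_choice x with h | h <;> simp only [h, sinhc_neg]

lemma sinhc_pos (x : ℝ) : 0 < sinhc x := by
  rw [← sinhc_abs]
  rcases (abs_nonneg x).eq_or_lt with h | h
  · simp [sinhc, ← h]
  · rw [sinhc, if_neg h.ne']
    exact div_pos (sinh_pos_iff.mpr h) h

lemma sinh_le_mul_cosh {x : ℝ} (hx : 0 ≤ x) : sinh x ≤ x * cosh x := by
  have hderiv (y : ℝ) : HasDerivAt (fun t => t * cosh t - sinh t) (y * sinh y) y :=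
    (((hasDerivAt_id' y).mul (hasDerivAt_cosh y)).sub (hasDerivAt_sinh y)).congr_deriv
      (by ring)
  have hmono : MonotoneOn (fun t => t * cosh t - sinh t) (Set.Ici 0) := by
    refine monotoneOn_of_deriv_nonneg (convex_Ici 0)
      (fun y _ => (hderiv y).continuousAt.continuousWithinAt)
      (fun y _ => (hderiv y).differentiableAt.differentiableWithinAt) fun y hy => ?_
    rw [interior_Ici] at hy
    rw [(hderiv y).deriv]
    exact mul_nonneg hy.le (sinh_nonneg_iff.mpr hy.le)
  simpa using hmono Set.self_mem_Ici hx hx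

lemma cosh_le_one_add_abs_mul_sinhc (x : ℝ) : cosh x ≤ (1 + |x|) * sinhc x := by
  rw [← cosh_abs, ← sinhc_abs]
  rcases (abs_nonneg x).eq_or_lt with h | h
  · simp [sinhc, ← h]
  · rw [sinhc, if_neg h.ne', mul_div_assoc', le_div_iff₀ h]
    have : |x| * exp (-|x|) ≤ sinh |x| := by
      nlinarith [self_le_sinh_iff.mpr h.le, exp_le_one_iff.mpr (neg_nonpos.mpr h.le)]
    nlinarith [cosh_sub_sinh |x|]

lemma one_add_abs_mul_sinhc_le (x : ℝ) : (1 + |x|) * sinhc x ≤ 2 * cosh x := by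
  rw [← cosh_abs, ← sinhc_abs]
  rcases (abs_nonneg x).eq_or_lt with h | h
  · simp [sinhc, ← h]
  · rw [sinhc, if_neg h.ne', mul_div_assoc', div_le_iff₀ h]
    nlinarith [sinh_le_mul_cosh h.le, sinh_lt_cosh |x|]

lemma cosh_add_le_exp_mul_cosh (x : ℝ) {y : ℝ} (hy : 0 ≤ y) :
    cosh (x + y) ≤ exp y * cosh x := by
  rw [cosh_eq, cosh_eq, exp_add, neg_add, exp_add]
  nlinarith [exp_pos (-x), exp_le_exp.mpr (neg_le_self hy), exp_pos (-y)]

lemma cosh_add_le_two_mul_cosh_mul_cosh (a b : ℝ) : cosh (a + b) ≤ 2 * cosh a * cosh b := by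
  nlinarith [cosh_add a b, cosh_sub a b, cosh_pos (a - b)]

lemma two_mul_cosh_mul_cosh_le {a b c : ℝ} (hc : 0 ≤ c) (ha : -c ≤ a) (hb : -c ≤ b) :
    2 * cosh a * cosh b ≤ (1 + exp (2 * c)) * cosh (a + b) := by
  have hdiff : cosh (a - b) ≤ cosh (|a + b| + 2 * c) := by
    rw [cosh_le_cosh, abs_of_nonneg (by positivity : 0 ≤ |a + b| + 2 * c)]
    have : |a - b| ≤ a + b + 2 * c := abs_sub_le_iff.mpr ⟨by linarith, by linarith⟩
    linarith [le_abs_self (a + b)]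
  have := cosh_add_le_exp_mul_cosh |a + b| (by positivity : 0 ≤ 2 * c)
  rw [cosh_abs] at this
  nlinarith [cosh_add a b, cosh_sub a b]

lemma tanh_add_tanh (a b : ℝ) : tanh a + tanh b = sinh (a + b) / (cosh a * cosh b) := by
  have := (cosh_pos a).ne'
  have := (cosh_pos b).ne'
  rw [tanh_eq_sinh_div_cosh, tanh_eq_sinh_div_cosh, sinh_add]
  field_simp

lemma one_sub_tanh_sq (a : ℝ) : 1 - tanh a ^ 2 = (cosh a ^ 2)⁻¹ := by
  have := (cosh_pos a).ne'
  rw [tanh_eq_sinh_div_cosh]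
  field_simp
  linarith [cosh_sq a]

end Real

open Real

lemma Lfun_inv_eq {T : ℝ} (hT : T ≠ 0) (μ p q : ℝ) :
    (Lfun T μ p q)⁻¹ = 2 * T * (cosh ((p ^ 2 - μ) / (2 * T)) * cosh ((q ^ 2 - μ) / (2 * T)) /
      sinhc ((p ^ 2 - μ) / (2 * T) + (q ^ 2 - μ) / (2 * T))) := by
  rw [Lfun]
  set a := (p ^ 2 - μ) / (2 * T)
  set b := (q ^ 2 - μ) / (2 * T)
  have hsum : p ^ 2 + q ^ 2 - 2 * μ = 2 * T * (a + b) := by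
    simp only [a, b]; field_simp; ring
  have hcond : p ^ 2 + q ^ 2 = 2 * μ ↔ a + b = 0 := by
    rw [← sub_eq_zero, hsum]; simp [hT]
  have := (cosh_pos a).ne'
  have := (cosh_pos b).ne'
  rw [if_congr hcond rfl rfl, sinhc]
  split_ifs with hab
  · rw [show b = -a by linarith, cosh_neg, one_sub_tanh_sq]
    field_simp
  · rw [hsum, tanh_add_tanh]
    have := sinh_ne_zero.mpr hab
    field_simp

lemma one_add_abs_le_cosh_mul_cosh_div_sinhc (a b : ℝ) :
    (1 + |a + b|) / 4 ≤ cosh a * cosh b / sinhc (a + b) := by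
  rw [le_div_iff₀ (sinhc_pos _)]
  nlinarith [one_add_abs_mul_sinhc_le (a + b), cosh_add_le_two_mul_cosh_mul_cosh a b]

lemma cosh_mul_cosh_div_sinhc_le {a b c : ℝ} (hc : 0 ≤ c) (ha : -c ≤ a) (hb : -c ≤ b) :
    cosh a * cosh b / sinhc (a + b) ≤ (1 + exp (2 * c)) / 2 * (1 + |a + b|) := by
  rw [div_le_iff₀ (sinhc_pos _)]
  nlinarith [cosh_le_one_add_abs_mul_sinhc (a + b), two_mul_cosh_mul_cosh_le hc ha hb,
    exp_pos (2 * c)]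

lemma one_add_le_mul_one_add_abs {T μ s u : ℝ} (hT : 0 ≤ T) (hs : s = 2 * T * u + 2 * μ) :
    1 + s ≤ (1 + 2 * |μ| + 2 * T) * (1 + |u|) := by
  nlinarith [le_abs_self u, le_abs_self μ, abs_nonneg u, abs_nonneg μ]

lemma mul_one_add_abs_le_mul_one_add {T μ s u : ℝ} (hT : 0 ≤ T) (hs₀ : 0 ≤ s)
    (hs : s = 2 * T * u + 2 * μ) :
    2 * T * (1 + |u|) ≤ (1 + 2 * |μ| + 2 * T) * (1 + s) := by
  have : 0 ≤ (2 * |μ| + 2 * T) * s := by positivity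
  rcases abs_cases u with ⟨hu, _⟩ | ⟨hu, _⟩ <;> nlinarith [le_abs_self μ, neg_abs_le μ]

theorem lfun_inv_bounds (T : ℝ) (hT : 0 < T) (μ : ℝ) :
    ∃ C₁ C₂ : ℝ, 0 < C₁ ∧ 0 < C₂ ∧ ∀ p q : ℝ,
      C₁ * (1 + p ^ 2 + q ^ 2) ≤ (Lfun T μ p q)⁻¹ ∧
      (Lfun T μ p q)⁻¹ ≤ C₂ * (1 + p ^ 2 + q ^ 2) := by
  set K := 1 + 2 * |μ| + 2 * T
  set c := |μ| / (2 * T)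
  have hK : 0 < K := by positivity
  refine ⟨T / (2 * K), (1 + exp (2 * c)) / 2 * K, by positivity, by positivity, fun p q => ?_⟩
  set a := (p ^ 2 - μ) / (2 * T)
  set b := (q ^ 2 - μ) / (2 * T)
  have hs : p ^ 2 + q ^ 2 = 2 * T * (a + b) + 2 * μ := by
    simp only [a, b]; field_simp; ring
  have hsK := one_add_le_mul_one_add_abs hT.le hs
  have huK := mul_one_add_abs_le_mul_one_add hT.le (by positivity) hs
  have hbelow (x : ℝ) : -c ≤ (x ^ 2 - μ) / (2 * T) := by
    rw [le_div_iff₀ (by positivity)]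
    simp only [c]; field_simp
    nlinarith [sq_nonneg x, le_abs_self μ]
  have hlow := one_add_abs_le_cosh_mul_cosh_div_sinhc a b
  have hup := cosh_mul_cosh_div_sinhc_le (by positivity) (hbelow p) (hbelow q)
  rw [Lfun_inv_eq hT.ne', add_assoc 1]
  constructor
  · calc T / (2 * K) * (1 + (p ^ 2 + q ^ 2)) ≤ T / (2 * K) * (K * (1 + |a + b|)) := by gcongr
      _ = 2 * T * ((1 + |a + b|) / 4) := by field_simp; ring
      _ ≤ _ := by gcongr
  · calc 2 * T * (cosh a * cosh b / sinhc (a + b))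
        ≤ 2 * T * ((1 + exp (2 * c)) / 2 * (1 + |a + b|)) := by gcongr
      _ = (1 + exp (2 * c)) / 2 * (2 * T * (1 + |a + b|)) := by ring
      _ ≤ (1 + exp (2 * c)) / 2 * (K * (1 + (p ^ 2 + q ^ 2))) := by gcongr
      _ = _ := by ring
end

section
/- For every μ ∈ ℝ and every T₀ > 0 there exists a constant C₃ > 0 such that for all T > T₀ and all p, q ∈ ℝ one has C₃(T + p² + q²) ≤ L_{T,μ}(p,q)^{-1}. -/
open MeasureTheory Real Filter

/-!
Writing `a = (p² - μ)/(2T)` and `b = (q² - μ)/(2T)`, one has `L_{T,μ}(p,q) = r/(2T)` where `r` is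
either the difference quotient `(tanh a + tanh b)/(a + b)` of `tanh` between `-b` and `a`, or its
derivative `1 - tanh² a`. As `tanh` is increasing and `1`-Lipschitz, `r ∈ (0, 1]`, so
`L⁻¹ ≥ 2T`; as `|tanh| < 1`, also `L⁻¹ ≥ (p² + q²)/2 - μ`. For `T > T₀` the constant `μ` is
absorbed by a multiple of `T`, and a positive combination of the two bounds gives the claim.
-/

namespace Real

theorem hasDerivAt_tanh (x : ℝ) : HasDerivAt tanh (1 - tanh x ^ 2) x := by
  have h := (hasDerivAt_sinh x).div (hasDerivAt_cosh x) (cosh_pos x).ne'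
  rw [show sinh / cosh = tanh from funext fun y => (tanh_eq_sinh_div_cosh y).symm] at h
  refine h.congr_deriv ?_
  rw [tanh_eq_sinh_div_cosh]
  field_simp

theorem strictMono_tanh : StrictMono tanh :=
  strictMono_of_deriv_pos fun x => by
    rw [(hasDerivAt_tanh x).deriv, sub_pos, sq_lt_one_iff_abs_lt_one]
    exact abs_tanh_lt_one x

theorem monotone_id_sub_tanh : Monotone fun x => x - tanh x := by
  have hderiv x : HasDerivAt (fun x => x - tanh x) (tanh x ^ 2) x :=
    ((hasDerivAt_id' x).sub (hasDerivAt_tanh x)).congr_deriv (by ring)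
  exact monotone_of_deriv_nonneg (fun x => (hderiv x).differentiableAt)
    fun x => (hderiv x).deriv ▸ sq_nonneg _

theorem tanh_add_tanh_div_add_mem_Ioc_of_pos {x y : ℝ} (h : 0 < x + y) :
    (tanh x + tanh y) / (x + y) ∈ Set.Ioc 0 1 := by
  have hlt : tanh (-y) < tanh x := strictMono_tanh (by linarith)
  have hle : -y - tanh (-y) ≤ x - tanh x := monotone_id_sub_tanh (by linarith)
  rw [tanh_neg] at hlt hle
  exact ⟨div_pos (by linarith) h, (div_le_one h).2 (by linarith)⟩

theorem tanh_add_tanh_div_add_mem_Ioc {x y : ℝ} (h : x + y ≠ 0) :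
    (tanh x + tanh y) / (x + y) ∈ Set.Ioc 0 1 := by
  rcases h.lt_or_gt with hneg | hpos
  · have := tanh_add_tanh_div_add_mem_Ioc_of_pos (x := -x) (y := -y) (by linarith)
    rwa [tanh_neg, tanh_neg, ← neg_add, ← neg_add, neg_div_neg_eq] at this
  · exact tanh_add_tanh_div_add_mem_Ioc_of_pos hpos

end Real

theorem exists_Lfun_eq_div {T : ℝ} (hT : T ≠ 0) (μ p q : ℝ) :
    ∃ r ∈ Set.Ioc (0 : ℝ) 1, Lfun T μ p q = r / (2 * T) := by
  set a := (p ^ 2 - μ) / (2 * T)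
  set b := (q ^ 2 - μ) / (2 * T)
  unfold Lfun
  split_ifs with h
  · refine ⟨1 - tanh a ^ 2, ⟨?_, ?_⟩, rfl⟩
    · rw [sub_pos, sq_lt_one_iff_abs_lt_one]
      exact abs_tanh_lt_one a
    · linarith [sq_nonneg (tanh a)]
  · have hab : p ^ 2 + q ^ 2 - 2 * μ = (a + b) * (2 * T) := by
      simp only [a, b]
      field_simp
      ring
    have hab0 : a + b ≠ 0 := by
      intro h0
      exact h (sub_eq_zero.1 (by simpa [h0] using hab))
    exact ⟨_, tanh_add_tanh_div_add_mem_Ioc hab0, by rw [hab, div_div]⟩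

theorem Lfun_pos {T : ℝ} (hT : 0 < T) (μ p q : ℝ) : 0 < Lfun T μ p q := by
  obtain ⟨r, ⟨hr, -⟩, hL⟩ := exists_Lfun_eq_div hT.ne' μ p q
  rw [hL]
  positivity

theorem two_mul_le_inv_Lfun {T : ℝ} (hT : 0 < T) (μ p q : ℝ) :
    2 * T ≤ (Lfun T μ p q)⁻¹ := by
  obtain ⟨r, ⟨hr, hr1⟩, hL⟩ := exists_Lfun_eq_div hT.ne' μ p q
  rw [hL, inv_div, le_div_iff₀ hr]
  nlinarith

theorem half_sub_le_inv_Lfun {T : ℝ} (hT : 0 < T) (μ p q : ℝ) :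
    (p ^ 2 + q ^ 2) / 2 - μ ≤ (Lfun T μ p q)⁻¹ := by
  have hL := Lfun_pos hT μ p q
  rcases le_or_gt (p ^ 2 + q ^ 2) (2 * μ) with hle | hgt
  · linarith [inv_pos.2 hL]
  · have hne : p ^ 2 + q ^ 2 ≠ 2 * μ := hgt.ne'
    have hd : 0 < p ^ 2 + q ^ 2 - 2 * μ := by linarith
    have hnum := add_lt_add (tanh_lt_one ((p ^ 2 - μ) / (2 * T)))
      (tanh_lt_one ((q ^ 2 - μ) / (2 * T)))
    have hL2 : Lfun T μ p q ≤ 2 / (p ^ 2 + q ^ 2 - 2 * μ) := by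
      rw [Lfun, if_neg hne]
      exact div_le_div_of_nonneg_right (by linarith) hd.le
    calc (p ^ 2 + q ^ 2) / 2 - μ = (2 / (p ^ 2 + q ^ 2 - 2 * μ))⁻¹ := by
          rw [inv_div]; ring
      _ ≤ (Lfun T μ p q)⁻¹ := inv_anti₀ hL hL2

theorem lfun_inv_lower_bound_uniform (μ T₀ : ℝ) (hT₀ : 0 < T₀) :
    ∃ C₃ : ℝ, 0 < C₃ ∧ ∀ T : ℝ, T₀ < T → ∀ p q : ℝ,
      C₃ * (T + p ^ 2 + q ^ 2) ≤ (Lfun T μ p q)⁻¹ := by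
  set k := |μ| / T₀
  have hk : 0 ≤ k := by positivity
  refine ⟨1 / (2 * (2 + k)), by positivity, fun T hT p q => ?_⟩
  have hT0 : 0 < T := hT₀.trans hT
  have hμ : μ ≤ k * T := calc
    μ ≤ |μ| := le_abs_self μ
    _ = k * T₀ := (div_mul_cancel₀ _ hT₀.ne').symm
    _ ≤ k * T := by gcongr
  have h₁ := two_mul_le_inv_Lfun hT0 μ p q
  have h₂ := half_sub_le_inv_Lfun hT0 μ p q
  -- Weighing `h₁` by `1 + k` and `h₂` by `1` cancels the `μ`-term against `T`.
  rw [div_mul_eq_mul_div, one_mul, div_le_iff₀ (by positivity)]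
  nlinarith [mul_le_mul_of_nonneg_left h₁ hk, sq_nonneg p, sq_nonneg q]
end

section
/- For all real x ≠ 0 and y ≠ 0 with x + y ≠ 0 one has (tanh x + tanh y)/(x + y) ≤ (1/2)·(tanh(x)/x + tanh(y)/y). -/
open Real

/-- `t < sinh t * cosh t` for `t > 0`. -/
lemma self_lt_sinh_mul_cosh {t : ℝ} (ht : 0 < t) : t < Real.sinh t * Real.cosh t := by
  have h := Real.self_lt_sinh_iff.mpr (show (0:ℝ) < 2*t by linarith)
  rw [Real.sinh_two_mul] at h
  linarith

/-- derivative of tanh t / t on positives. -/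
lemma hasDerivAt_tanh_div (t : ℝ) (ht : t ≠ 0) :
    HasDerivAt (fun s => Real.tanh s / s)
      ((((Real.cosh t * Real.cosh t - Real.sinh t * Real.sinh t) / Real.cosh t ^ 2) * t
        - Real.tanh t * 1) / t ^ 2) t := by
  have h1 : HasDerivAt Real.tanh
      ((Real.cosh t * Real.cosh t - Real.sinh t * Real.sinh t) / Real.cosh t ^ 2) t := by
    have := (Real.hasDerivAt_sinh t).div (Real.hasDerivAt_cosh t) (Real.cosh_pos t).ne'
    have heq : Real.tanh = fun s => Real.sinh s / Real.cosh s := by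
      funext s; exact Real.tanh_eq_sinh_div_cosh s
    rw [heq]
    exact this
  exact h1.div (hasDerivAt_id t) ht

/-- tanh t / t is strictly decreasing, in the form we need. -/
lemma tanh_div_anti {a b : ℝ} (ha : 0 < a) (hab : a ≤ b) :
    Real.tanh b / b ≤ Real.tanh a / a := by
  rcases eq_or_lt_of_le hab with rfl | hlt
  · exact le_rfl
  have hanti : StrictAntiOn (fun s => Real.tanh s / s) (Set.Ici a) := by
    apply strictAntiOn_of_deriv_neg (convex_Ici a)
    · have hteq : (fun s => Real.tanh s / s) = fun s => (Real.sinh s / Real.cosh s) / s := by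
        funext s; rw [Real.tanh_eq_sinh_div_cosh]
      rw [hteq]
      apply ContinuousOn.div
      · exact (Real.continuous_sinh.div Real.continuous_cosh
          (fun s => (Real.cosh_pos s).ne')).continuousOn
      · exact continuous_id.continuousOn
      · intro s hs; simp only [Set.mem_Ici] at hs; intro h; rw [h] at hs; linarith
    · intro s hs
      rw [interior_Ici, Set.mem_Ioi] at hs
      have hs0 : 0 < s := lt_trans ha hs
      rw [(hasDerivAt_tanh_div s hs0.ne').deriv]
      have hc := Real.cosh_pos s
      have hkey := self_lt_sinh_mul_cosh hs0
      rw [Real.tanh_eq_sinh_div_cosh]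
      have h1 : Real.cosh s * Real.cosh s - Real.sinh s * Real.sinh s = 1 := by
        have := Real.cosh_sq_sub_sinh_sq s; nlinarith
      rw [h1]
      have h2 : (1 / Real.cosh s ^ 2 * s - Real.sinh s / Real.cosh s * 1) / s ^ 2
          = ((s - Real.sinh s * Real.cosh s) / Real.cosh s ^ 2) / s ^ 2 := by
        rw [div_left_inj' (by positivity : (s:ℝ)^2 ≠ 0)]
        field_simp
      rw [h2]
      apply div_neg_of_neg_of_pos _ (by positivity)
      exact div_neg_of_neg_of_pos (by linarith) (by positivity)
  exact le_of_lt (hanti (Set.mem_Ici.mpr le_rfl) (Set.mem_Ici.mpr hab) hlt)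

/-- evenness + antitonicity: depends only on squares. -/
lemma tanh_div_sq {a b : ℝ} (ha : a ≠ 0) (hb : b ≠ 0) (h : a ^ 2 ≤ b ^ 2) :
    Real.tanh b / b ≤ Real.tanh a / a := by
  have habs : ∀ t : ℝ, t ≠ 0 → Real.tanh t / t = Real.tanh |t| / |t| := by
    intro t ht
    rcases abs_cases t with ⟨h1, _⟩ | ⟨h1, _⟩
    · rw [h1]
    · rw [h1, Real.tanh_neg, neg_div_neg_eq]
  rw [habs a ha, habs b hb]
  apply tanh_div_anti (abs_pos.mpr ha)
  have := abs_le_abs (a := |a|) (b := |b|)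
  nlinarith [abs_nonneg a, abs_nonneg b, sq_abs a, sq_abs b, abs_pos.mpr ha, abs_pos.mpr hb]

theorem tanh_sum_div_le (x y : ℝ) (hx : x ≠ 0) (hy : y ≠ 0) (hxy : x + y ≠ 0) :
    (Real.tanh x + Real.tanh y) / (x + y) ≤
      (1 / 2) * (Real.tanh x / x + Real.tanh y / y) := by
  set A := Real.tanh x / x with hA
  set B := Real.tanh y / y with hB
  have hTx : Real.tanh x = A * x := by rw [hA]; field_simp
  have hTy : Real.tanh y = B * y := by rw [hB]; field_simp
  have key : 0 ≤ (x - y) * (B - A) * (x + y) := by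
    rcases le_total (y ^ 2) (x ^ 2) with h | h
    · have hBA : A ≤ B := tanh_div_sq hy hx h
      nlinarith
    · have hBA : B ≤ A := tanh_div_sq hx hy h
      nlinarith
  have hid : (1 / 2) * (A + B) - (Real.tanh x + Real.tanh y) / (x + y)
      = ((x - y) * (B - A) * (x + y)) / (2 * (x + y) ^ 2) := by
    rw [hTx, hTy]
    field_simp
    ring
  have hnn : 0 ≤ ((x - y) * (B - A) * (x + y)) / (2 * (x + y) ^ 2) := by
    apply div_nonneg key
    positivity
  linarith [hid ▸ hnn]
end

section
/- For all x > 0 and y > 0 with x ≠ y one has (tanh x − tanh y)/(x − y) ≤ 4·exp(−2·min{x,y}). -/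
/-! Mean value theorem: `tanh' = 1 / cosh² ≤ 4 exp (-2t)` since `exp t ≤ 2 cosh t`, and this bound
is decreasing, so on `[min x y, max x y]` it is at most its value at `min x y`. -/

namespace Real

theorem hasDerivAt_tanh_s5 (t : ℝ) : HasDerivAt tanh (cosh t ^ 2)⁻¹ t := by
  have h := (hasDerivAt_sinh t).div (hasDerivAt_cosh t) (cosh_pos t).ne'
  rw [show sinh / cosh = tanh from funext fun x => (tanh_eq_sinh_div_cosh x).symm] at h
  refine h.congr_deriv ?_
  rw [← one_div, ← cosh_sq_sub_sinh_sq t]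
  ring

theorem differentiable_tanh : Differentiable ℝ tanh :=
  fun t => (hasDerivAt_tanh_s5 t).differentiableAt

theorem inv_cosh_sq_le (t : ℝ) : (cosh t ^ 2)⁻¹ ≤ 4 * exp (-2 * t) := by
  have h_exp_le : exp t ≤ 2 * cosh t := by
    rw [cosh_eq]
    linarith [exp_pos (-t)]
  calc (cosh t ^ 2)⁻¹ ≤ ((exp t / 2) ^ 2)⁻¹ := by
        gcongr
        linarith
    _ = 4 * exp (-2 * t) := by
        rw [div_pow, inv_div, ← exp_nat_mul, show -2 * t = -(2 * t) by ring, exp_neg]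
        norm_num [div_eq_mul_inv, mul_comm]

theorem tanh_sub_tanh_le {a b : ℝ} (hab : a ≤ b) :
    tanh b - tanh a ≤ 4 * exp (-2 * a) * (b - a) := by
  refine (convex_Ici a).image_sub_le_mul_sub_of_deriv_le differentiable_tanh.continuous.continuousOn
    differentiable_tanh.differentiableOn (fun t ht => ?_) a Set.self_mem_Ici b hab hab
  rw [interior_Ici, Set.mem_Ioi] at ht
  calc deriv tanh t = (cosh t ^ 2)⁻¹ := (hasDerivAt_tanh_s5 t).deriv
    _ ≤ 4 * exp (-2 * t) := inv_cosh_sq_le t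
    _ ≤ 4 * exp (-2 * a) := by gcongr 4 * exp ?_; linarith

end Real

theorem tanh_diff_quotient_le_general (x y : ℝ) (hxy : x ≠ y) :
    (Real.tanh x - Real.tanh y) / (x - y) ≤ 4 * Real.exp (-2 * min x y) := by
  rcases hxy.lt_or_gt with h | h
  · rw [← neg_div_neg_eq, neg_sub, neg_sub, min_eq_left h.le, div_le_iff₀ (sub_pos.2 h)]
    exact Real.tanh_sub_tanh_le h.le
  · rw [min_eq_right h.le, div_le_iff₀ (sub_pos.2 h)]
    exact Real.tanh_sub_tanh_le h.le

theorem tanh_diff_quotient_le (x y : ℝ) (hx : 0 < x) (hy : 0 < y) (hxy : x ≠ y) :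
    (Real.tanh x - Real.tanh y) / (x - y) ≤ 4 * Real.exp (-2 * min x y) :=
  tanh_diff_quotient_le_general x y hxy
end

section
/- For all p, q ∈ ℝ with (p,q) ≠ (0,0) one has B_{1,0}(p,q) ≤ tanh((p²+q²)/8) / ((p²+q²)/4). -/
open MeasureTheory Real Filter

lemma tanh_add_tanh_le {x y : ℝ} (hx : 0 ≤ x) (hy : 0 ≤ y) :
    Real.tanh x + Real.tanh y ≤ 2 * Real.tanh ((x + y) / 2) := by
  set m := (x + y) / 2 with hm
  have hcx := Real.cosh_pos x
  have hcy := Real.cosh_pos y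
  have hcm := Real.cosh_pos m
  have h1 : Real.tanh x + Real.tanh y = Real.sinh (x + y) / (Real.cosh x * Real.cosh y) := by
    rw [Real.tanh_eq_sinh_div_cosh, Real.tanh_eq_sinh_div_cosh, Real.sinh_add]
    field_simp
  have h2 : 2 * Real.tanh m = Real.sinh (x + y) / (Real.cosh m ^ 2) := by
    have : x + y = m + m := by rw [hm]; ring
    rw [this, Real.tanh_eq_sinh_div_cosh, Real.sinh_add]
    field_simp
    ring
  rw [h1, h2]
  have hs : 0 ≤ Real.sinh (x + y) := Real.sinh_nonneg_iff.mpr (by linarith)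
  have hkey : Real.cosh m ^ 2 ≤ Real.cosh x * Real.cosh y := by
    have e1 : Real.cosh x * Real.cosh y
        = (Real.cosh (x + y) + Real.cosh (x - y)) / 2 := by
      rw [Real.cosh_add, Real.cosh_sub]; ring
    have e2 : Real.cosh m ^ 2 = (Real.cosh (x + y) + 1) / 2 := by
      have : x + y = m + m := by rw [hm]; ring
      rw [this, Real.cosh_add]
      linear_combination (1/2) * Real.cosh_sq m
    rw [e1, e2]
    have := Real.one_le_cosh (x - y)
    linarith
  exact div_le_div_of_nonneg_left hs (by positivity) hkey

theorem Bfun_le_tanh_bound (p q : ℝ) (hpq : (p, q) ≠ (0, 0)) :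
    Bfun 1 0 p q ≤ Real.tanh ((p ^ 2 + q ^ 2) / 8) / ((p ^ 2 + q ^ 2) / 4) := by
  have hs : 0 < p ^ 2 + q ^ 2 := by
    have h : p ≠ 0 ∨ q ≠ 0 := by
      by_contra h
      push_neg at h
      exact hpq (by simp [h.1, h.2])
    rcases h with h | h
    · positivity
    · positivity
  rw [Bfun, Lfun, if_neg (by intro h; nlinarith)]
  have e1 : (((p + q) / 2) ^ 2 - 0) / (2 * 1) = (p + q) ^ 2 / 8 := by ring
  have e2 : (((p - q) / 2) ^ 2 - 0) / (2 * 1) = (p - q) ^ 2 / 8 := by ring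
  have e3 : ((p + q) / 2) ^ 2 + ((p - q) / 2) ^ 2 - 2 * 0 = (p ^ 2 + q ^ 2) / 2 := by ring
  rw [e1, e2, e3]
  have key := tanh_add_tanh_le (x := (p + q) ^ 2 / 8) (y := (p - q) ^ 2 / 8)
    (by positivity) (by positivity)
  have e4 : ((p + q) ^ 2 / 8 + (p - q) ^ 2 / 8) / 2 = (p ^ 2 + q ^ 2) / 8 := by ring
  rw [e4] at key
  rw [div_le_div_iff₀ (by positivity) (by positivity)]
  nlinarith [key, hs]
end

section
/- Let μ > 0. Then lim_{T→∞} √T · ∫_ℝ tanh((q²−μ)/(2T))/(q²−μ) dq = ∫_ℝ tanh(q²/2)/q² dq, where both integrands are extended continuously at their removable singularities. Equivalently, lim_{T→∞} T^{1/2}·a_{T,μ} = a_{1,0}. -/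
open MeasureTheory Real Filter

/-! The substitution `q = √T x` turns `√T ∫ F_{T,μ}` into `∫ F_{1,μ/T}`, so the claim is the
continuity at `ε = 0` of `ε ↦ ∫ F_{1,ε}`. This follows by dominated convergence: for `ε ≤ 1`,
`|F_{1,ε}(x)| ≤ 4/(1+x²)`, using `|tanh t| ≤ 2|t|` near the removable singularity and
`|tanh t| < 1` away from it. -/

theorem Real.continuous_tanh : Continuous tanh := by
  simp_rw [funext tanh_eq_sinh_div_cosh]
  exact continuous_sinh.div continuous_cosh fun x => (cosh_pos x).ne'

theorem Real.abs_tanh_le_two_mul_abs (t : ℝ) : |tanh t| ≤ 2 * |t| := by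
  wlog ht : 0 ≤ t generalizing t
  · simpa [tanh_neg] using this (-t) (by linarith)
  have hprod : exp t * exp (-t) = 1 := by rw [← exp_add, add_neg_cancel, exp_zero]
  rw [abs_of_nonneg ht, abs_le, tanh_eq, le_div_iff₀ (by positivity), div_le_iff₀ (by positivity)]
  constructor <;> nlinarith [add_one_le_exp t, add_one_le_exp (-t), exp_pos t, exp_pos (-t)]

theorem measurable_Ffun (T μ : ℝ) : Measurable (Ffun T μ) := by
  unfold Ffun
  refine Measurable.ite (measurableSet_eq_fun (by fun_prop) measurable_const) measurable_const ?_
  exact (continuous_tanh.measurable.comp (by fun_prop)).div (by fun_prop)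

theorem abs_Ffun_one_le {ε : ℝ} (hε : ε ≤ 1) (x : ℝ) : |Ffun 1 ε x| ≤ 4 * (1 + x ^ 2)⁻¹ := by
  rw [← div_eq_mul_inv, le_div_iff₀ (by positivity)]
  unfold Ffun
  split_ifs with h
  · rw [h, abs_of_pos (by norm_num)]
    linarith
  have hy : 0 < |x ^ 2 - ε| := abs_pos.2 (sub_ne_zero.2 h)
  rw [abs_div, div_mul_eq_mul_div, div_le_iff₀ hy]
  rcases le_or_gt (x ^ 2) 3 with hx | hx
  · have htanh := abs_tanh_le_two_mul_abs ((x ^ 2 - ε) / (2 * 1))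
    rw [abs_div, abs_of_pos (by norm_num : (0:ℝ) < 2 * 1)] at htanh
    nlinarith [abs_nonneg (tanh ((x ^ 2 - ε) / (2 * 1)))]
  · rw [abs_of_pos (by linarith : 0 < x ^ 2 - ε)]
    nlinarith [abs_tanh_lt_one ((x ^ 2 - ε) / (2 * 1)), abs_nonneg (tanh ((x ^ 2 - ε) / (2 * 1)))]

theorem continuousAt_Ffun_of_sq_ne (T : ℝ) {ε x : ℝ} (h : x ^ 2 ≠ ε) :
    ContinuousAt (fun e => Ffun T e x) ε := by
  refine ContinuousAt.congr (f := fun e => tanh ((x ^ 2 - e) / (2 * T)) / (x ^ 2 - e)) ?_ ?_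
  · exact (continuous_tanh.continuousAt.comp (by fun_prop)).div (by fun_prop) (sub_ne_zero.2 h)
  · filter_upwards [eventually_ne_nhds h.symm] with ε' h'
    simp [Ffun, h'.symm]

theorem Ffun_sqrt_mul {T : ℝ} (hT : 0 < T) (μ x : ℝ) :
    Ffun T μ (√T * x) = T⁻¹ * Ffun 1 (μ / T) x := by
  have hsq : (√T * x) ^ 2 = T * x ^ 2 := by rw [mul_pow, sq_sqrt hT.le]
  have hiff : T * x ^ 2 = μ ↔ x ^ 2 = μ / T := by rw [eq_div_iff hT.ne', mul_comm]
  unfold Ffun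
  rw [hsq]
  by_cases h : x ^ 2 = μ / T
  · rw [if_pos (hiff.2 h), if_pos h]
    field_simp
  · rw [if_neg (mt hiff.1 h), if_neg h]
    have hden : T * x ^ 2 - μ = T * (x ^ 2 - μ / T) := by field_simp
    have harg : T * (x ^ 2 - μ / T) / (2 * T) = (x ^ 2 - μ / T) / (2 * 1) := by field_simp
    rw [hden, harg]
    field_simp

theorem sqrt_mul_integral_Ffun {T : ℝ} (hT : 0 < T) (μ : ℝ) :
    √T * ∫ q, Ffun T μ q = ∫ x, Ffun 1 (μ / T) x := by
  have hs : 0 < √T := sqrt_pos.2 hT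
  have h := Measure.integral_comp_mul_left (Ffun T μ) √T
  simp_rw [Ffun_sqrt_mul hT, integral_const_mul, abs_of_pos (inv_pos.2 hs), smul_eq_mul] at h
  rw [eq_inv_mul_iff_mul_eq₀ hs.ne'] at h
  rw [← h, ← mul_assoc, mul_self_sqrt hT.le, mul_inv_cancel_left₀ hT.ne']

theorem tendsto_integral_Ffun_one_nhds_zero :
    Tendsto (fun ε => ∫ x, Ffun 1 ε x) (nhds 0) (nhds (∫ x, Ffun 1 0 x)) := by
  refine tendsto_integral_filter_of_dominated_convergence (fun x => 4 * (1 + x ^ 2)⁻¹)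
    (Eventually.of_forall fun ε => (measurable_Ffun 1 ε).aestronglyMeasurable) ?_
    (integrable_inv_one_add_sq.const_mul 4) ?_
  · filter_upwards [eventually_le_nhds zero_lt_one] with ε hε
    exact Eventually.of_forall (abs_Ffun_one_le hε)
  · filter_upwards [compl_mem_ae_iff.2 (measure_singleton (0 : ℝ))] with x hx
    exact continuousAt_Ffun_of_sq_ne 1 (pow_ne_zero 2 hx)

theorem sqrtT_intF_tendsto_general (μ : ℝ) :
    Tendsto (fun T : ℝ => Real.sqrt T * ∫ q : ℝ, Ffun T μ q) atTop
      (nhds (∫ q : ℝ, Ffun 1 0 q)) := by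
  have hμT : Tendsto (fun T : ℝ => μ / T) atTop (nhds 0) :=
    tendsto_const_nhds.div_atTop tendsto_id
  refine (tendsto_integral_Ffun_one_nhds_zero.comp hμT).congr' ?_
  filter_upwards [eventually_gt_atTop 0] with T hT
  exact (sqrt_mul_integral_Ffun hT μ).symm

theorem sqrtT_intF_tendsto (μ : ℝ) (hμ : 0 < μ) :
    Tendsto (fun T : ℝ => Real.sqrt T * ∫ q : ℝ, Ffun T μ q) atTop
      (nhds (∫ q : ℝ, Ffun 1 0 q)) :=
  sqrtT_intF_tendsto_general μ
end
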